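/- arXiv:2404.06880 — 4 statements merged into one kernel-verified Lean document; each statement's English description precedes it below -/
import Mathlib

section
/- Let P_t, P_v, ρ, σ₀, σ_v, d₁, d₂, d₃ > 0 and k > 0. Define γ_AP = k / (σ₀² d₂² d₃² (ρ P_t + σ_v² d₁²)) and γ_PA = k / (d₁² d₂² σ_v² ρ P_v). Then γ_AP ≥ γ_PA if and only if 1/ρ ≤ P_v/(d₃² σ₀²) − P_t/(d₁² σ_v²). -/
/-! Both SNRs have the numerator `k`, so `γ_AP ≥ γ_PA` exactly when the TAPR denominator is at
most the TPAR one; cancelling `d₂²` and dividing by `ρ d₁² σ_v² d₃² σ₀²` gives the threshold. -/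

lemma mul_add_le_mul_iff_inv_add_div_le_div {x a b p q : ℝ} (hx : 0 < x) (ha : 0 < a)
    (hb : 0 < b) : b * (x * p + a) ≤ a * x * q ↔ 1 / x + p / a ≤ q / b := by
  rw [div_add_div _ _ hx.ne' ha.ne', div_le_div_iff₀ (by positivity) hb]
  constructor <;> intro h <;> linarith

/-- Proposition 3: `γ_AP ≥ γ_PA` iff `1/ρ ≤ P_v/(d₃²σ₀²) − P_t/(d₁²σ_v²)`. -/
theorem stmt_6 (Pt Pv ρ σ0 σv d1 d2 d3 k : ℝ)
    (hPt : 0 < Pt) (hPv : 0 < Pv) (hρ : 0 < ρ) (hσ0 : 0 < σ0) (hσv : 0 < σv)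
    (hd1 : 0 < d1) (hd2 : 0 < d2) (hd3 : 0 < d3) (hk : 0 < k) :
    k / (d1 ^ 2 * d2 ^ 2 * σv ^ 2 * ρ * Pv) ≤
        k / (σ0 ^ 2 * d2 ^ 2 * d3 ^ 2 * (ρ * Pt + σv ^ 2 * d1 ^ 2)) ↔
      1 / ρ ≤ Pv / (d3 ^ 2 * σ0 ^ 2) - Pt / (d1 ^ 2 * σv ^ 2) := by
  have hPA : d1 ^ 2 * d2 ^ 2 * σv ^ 2 * ρ * Pv = d2 ^ 2 * (d1 ^ 2 * σv ^ 2 * ρ * Pv) := by ring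
  have hAP : σ0 ^ 2 * d2 ^ 2 * d3 ^ 2 * (ρ * Pt + σv ^ 2 * d1 ^ 2) =
      d2 ^ 2 * (d3 ^ 2 * σ0 ^ 2 * (ρ * Pt + d1 ^ 2 * σv ^ 2)) := by ring
  rw [div_le_div_iff_of_pos_left hk (by positivity) (by positivity), hPA, hAP,
    mul_le_mul_iff_right₀ (by positivity), le_sub_iff_add_le,
    mul_add_le_mul_iff_inv_add_div_le_div hρ (by positivity) (by positivity)]
end

section
/- Let P_t, P_v, ρ, σ₀, σ_v, d₁, d₂, d₃, N_a, N_p > 0. With α² = P_v d₁² / (N_a (P_t ρ + d₁² σ_v²)), signal power S = P_t α² ρ³ N_a² N_p² / (d₁² d₂² d₃²) and effective noise N = σ_v² α² ρ² N_a N_p² / (d₂² d₃²) + σ₀², the ratio satisfies S/N = P_t P_v ρ³ / (P_v σ_v² ρ² d₁² / N_a + σ₀² d₂² d₃² (ρ P_t + σ_v² d₁²) / (N_a N_p²)). -/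
/-! Multiplying both powers by `c = (P_t ρ + d₁² σ_v²) d₂² d₃² / (N_a N_p²)` clears the
amplification gain: `c S = P_t P_v ρ³` and `c N = ζ_AP`. -/

theorem stmt_8_general (Pt Pv ρ σ0 σv d1 d2 d3 Na Np α2 S N : ℝ)
    (hPt : 0 < Pt) (hρ : 0 < ρ)
    (hd1 : 0 < d1) (hd2 : 0 < d2) (hd3 : 0 < d3) (hNa : 0 < Na) (hNp : 0 < Np)
    (hα : α2 = Pv * d1 ^ 2 / (Na * (Pt * ρ + d1 ^ 2 * σv ^ 2)))
    (hS : S = Pt * α2 * ρ ^ 3 * Na ^ 2 * Np ^ 2 / (d1 ^ 2 * d2 ^ 2 * d3 ^ 2))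
    (hN : N = σv ^ 2 * α2 * ρ ^ 2 * Na * Np ^ 2 / (d2 ^ 2 * d3 ^ 2) + σ0 ^ 2) :
    S / N = Pt * Pv * ρ ^ 3 /
      (Pv * σv ^ 2 * ρ ^ 2 * d1 ^ 2 / Na +
        σ0 ^ 2 * d2 ^ 2 * d3 ^ 2 * (ρ * Pt + σv ^ 2 * d1 ^ 2) / (Na * Np ^ 2)) := by
  have hden : Pt * ρ + d1 ^ 2 * σv ^ 2 ≠ 0 := by positivity
  set c := (Pt * ρ + d1 ^ 2 * σv ^ 2) * d2 ^ 2 * d3 ^ 2 / (Na * Np ^ 2) with hc_def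
  have hc : c ≠ 0 := by positivity
  have hcS : c * S = Pt * Pv * ρ ^ 3 := by
    rw [hc_def, hS, hα]
    field_simp
  have hcN : c * N = Pv * σv ^ 2 * ρ ^ 2 * d1 ^ 2 / Na +
      σ0 ^ 2 * d2 ^ 2 * d3 ^ 2 * (ρ * Pt + σv ^ 2 * d1 ^ 2) / (Na * Np ^ 2) := by
    rw [hc_def, hN, hα]
    field_simp
  rw [← mul_div_mul_left S N hc, hcS, hcN]

/-- Closed-form TAPR SNR (eq. (10)): with `α²` the optimal amplification gain,
the ratio of signal power to effective noise power equals
`P_t P_v ρ³ / (P_v σ_v² ρ² d₁²/N_a + σ₀² d₂² d₃² (ρ P_t + σ_v² d₁²)/(N_a N_p²))`. -/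
theorem stmt_8 (Pt Pv ρ σ0 σv d1 d2 d3 Na Np α2 S N : ℝ)
    (hPt : 0 < Pt) (hPv : 0 < Pv) (hρ : 0 < ρ) (hσ0 : 0 < σ0) (hσv : 0 < σv)
    (hd1 : 0 < d1) (hd2 : 0 < d2) (hd3 : 0 < d3) (hNa : 0 < Na) (hNp : 0 < Np)
    (hα : α2 = Pv * d1 ^ 2 / (Na * (Pt * ρ + d1 ^ 2 * σv ^ 2)))
    (hS : S = Pt * α2 * ρ ^ 3 * Na ^ 2 * Np ^ 2 / (d1 ^ 2 * d2 ^ 2 * d3 ^ 2))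
    (hN : N = σv ^ 2 * α2 * ρ ^ 2 * Na * Np ^ 2 / (d2 ^ 2 * d3 ^ 2) + σ0 ^ 2) :
    S / N = Pt * Pv * ρ ^ 3 /
      (Pv * σv ^ 2 * ρ ^ 2 * d1 ^ 2 / Na +
        σ0 ^ 2 * d2 ^ 2 * d3 ^ 2 * (ρ * Pt + σv ^ 2 * d1 ^ 2) / (Na * Np ^ 2)) :=
  stmt_8_general Pt Pv ρ σ0 σv d1 d2 d3 Na Np α2 S N hPt hρ hd1 hd2 hd3 hNa hNp hα hS hN
end

section
/- Let C₁, C₂, W₁, W₂, M > 0 with W₁ + W₂ < M (so that an interior feasible point with at least one element each exists). Consider minimizing G(x₁, x₂) = C₁/x₁ + C₂/(x₁ x₂²) over x₁, x₂ > 0 with W₁ x₁ + W₂ x₂ ≤ M. Then any minimizer (x₁*, x₂*) satisfies x₂* ≤ 2M/(3W₂), i.e., including the first (pure 1/x₁) term in the objective never increases the optimal passive allocation beyond the two-term approximation's value 2M/(3W₂). -/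
/-
Write `u = W₁ x₁` and `v = W₂ x₂` for the budget shares. If `v > 2M/3`, move the excess
`v - 2M/3` from the passive to the active side. The cubic `w ↦ (S - w) w²` with `S = u + v`
decreases beyond `2S/3 ≤ 2M/3`, so the product `x₁ x₂²` does not drop and the `C₂` term does
not grow, while `x₁` strictly increases and the `C₁` term strictly drops, contradicting
minimality.
-/

lemma antitoneOn_sub_mul_sq {S : ℝ} (hS : 0 ≤ S) :
    AntitoneOn (fun w : ℝ => (S - w) * w ^ 2) (Set.Ici (2 * S / 3)) := by
  intro c hc v _ hcv
  simp only [Set.mem_Ici] at hc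
  -- `(S - c) c² - (S - v) v² = (v - c)² (v + c/2) + (v - c) (3c - 2S) (v + c) / 2`
  have hvc := sub_nonneg.2 hcv
  nlinarith [mul_nonneg (mul_nonneg hvc hvc) (by linarith : 0 ≤ v + c / 2),
    mul_nonneg (mul_nonneg hvc (by linarith : 0 ≤ 3 * c - 2 * S)) (by linarith : 0 ≤ v + c)]

lemma mul_sq_le_of_shift_to_two_thirds {W₁ W₂ M x₁ x₂ y₁ y₂ : ℝ} (hW₁ : 0 < W₁) (hW₂ : 0 < W₂)
    (hx₁ : 0 < x₁) (hx₂ : 0 < x₂) (hbudget : W₁ * y₁ + W₂ * y₂ = W₁ * x₁ + W₂ * x₂)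
    (hfeas : W₁ * x₁ + W₂ * x₂ ≤ M) (hy₂ : 2 * M / 3 ≤ W₂ * y₂) (hyx : y₂ ≤ x₂) :
    x₁ * x₂ ^ 2 ≤ y₁ * y₂ ^ 2 := by
  set S := W₁ * x₁ + W₂ * x₂
  have hS : 0 ≤ S := by positivity
  have h := antitoneOn_sub_mul_sq hS (show 2 * S / 3 ≤ W₂ * y₂ by linarith)
    (show 2 * S / 3 ≤ W₂ * x₂ by nlinarith) (mul_le_mul_of_nonneg_left hyx hW₂.le)
  have hW : 0 < W₁ * W₂ ^ 2 := by positivity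
  have hx : S - W₂ * x₂ = W₁ * x₁ := by ring
  have hy : S - W₂ * y₂ = W₁ * y₁ := by linarith
  simp only [hx, hy] at h
  refine le_of_mul_le_mul_right ?_ hW
  linear_combination h

theorem stmt_15_general (C₁ C₂ W₁ W₂ M : ℝ)
    (hC₁ : 0 < C₁) (hC₂ : 0 < C₂) (hW₁ : 0 < W₁) (hW₂ : 0 < W₂) (hM : 0 < M)
    (x₁ x₂ : ℝ) (hx₁ : 0 < x₁) (hx₂ : 0 < x₂)
    (hfeas : W₁ * x₁ + W₂ * x₂ ≤ M)
    (hmin : ∀ y₁ y₂ : ℝ, 0 < y₁ → 0 < y₂ → W₁ * y₁ + W₂ * y₂ ≤ M →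
      C₁ / x₁ + C₂ / (x₁ * x₂ ^ 2) ≤ C₁ / y₁ + C₂ / (y₁ * y₂ ^ 2)) :
    x₂ ≤ 2 * M / (3 * W₂) := by
  by_contra! hx₂_large
  set y₂ := 2 * M / (3 * W₂)
  set y₁ := x₁ + W₂ * (x₂ - y₂) / W₁
  have hy₂ : W₂ * y₂ = 2 * M / 3 := by simp only [y₂]; field_simp
  have hbudget : W₁ * y₁ + W₂ * y₂ = W₁ * x₁ + W₂ * x₂ := by simp only [y₁]; field_simp; ring
  have hxy₁ : x₁ < y₁ := lt_add_of_pos_right x₁ (by have := sub_pos.2 hx₂_large; positivity)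
  have hprod : x₁ * x₂ ^ 2 ≤ y₁ * y₂ ^ 2 :=
    mul_sq_le_of_shift_to_two_thirds hW₁ hW₂ hx₁ hx₂ hbudget hfeas hy₂.ge hx₂_large.le
  have hC₁_drop : C₁ / y₁ < C₁ / x₁ := div_lt_div_of_pos_left hC₁ hx₁ hxy₁
  have hC₂_drop : C₂ / (y₁ * y₂ ^ 2) ≤ C₂ / (x₁ * x₂ ^ 2) :=
    div_le_div_of_nonneg_left hC₂.le (by positivity) hprod
  have := hmin y₁ y₂ (hx₁.trans hxy₁) (by positivity) (by linarith)
  linarith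

/-- Exact objective `G(x₁,x₂) = C₁/x₁ + C₂/(x₁ x₂²)`: any minimizer under the budget
constraint has passive allocation at most the two-term optimum `2M/(3W₂)`. -/
theorem stmt_15 (C₁ C₂ W₁ W₂ M : ℝ)
    (hC₁ : 0 < C₁) (hC₂ : 0 < C₂) (hW₁ : 0 < W₁) (hW₂ : 0 < W₂) (hM : 0 < M)
    (hint : W₁ + W₂ < M)
    (x₁ x₂ : ℝ) (hx₁ : 0 < x₁) (hx₂ : 0 < x₂)
    (hfeas : W₁ * x₁ + W₂ * x₂ ≤ M)
    (hmin : ∀ y₁ y₂ : ℝ, 0 < y₁ → 0 < y₂ → W₁ * y₁ + W₂ * y₂ ≤ M →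
      C₁ / x₁ + C₂ / (x₁ * x₂ ^ 2) ≤ C₁ / y₁ + C₂ / (y₁ * y₂ ^ 2)) :
    x₂ ≤ 2 * M / (3 * W₂) :=
  stmt_15_general C₁ C₂ W₁ W₂ M hC₁ hC₂ hW₁ hW₂ hM x₁ x₂ hx₁ hx₂ hfeas hmin
end

section
/- Let a, b > 0 and M, W₁, W₂ > 0. On the budget curve x₁ = (M − W₂ x₂)/W₁, 0 < x₂ < M/W₂, the function G(x₂) = a W₁/(M − W₂ x₂) + b W₁/((M − W₂ x₂) x₂²) is differentiable, and its derivative has the same sign as a W₂ x₂³ − b(2M − 3W₂ x₂). In particular G has at least one critical point in (0, 2M/(3W₂)). -/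
/-!
Writing `u = M - W₂x`, the derivative of `G` is `W₁ / (u² x³)` times the cubic
`a W₂ x³ - b (2M - 3 W₂ x)`, and that factor is positive on `(0, M/W₂)`, so `G'` and the cubic
share their sign there. The cubic equals `-2bM < 0` at `0` and `a W₂ (2M/(3W₂))³ > 0` at
`2M/(3W₂)`, so by the intermediate value theorem it vanishes strictly in between.
-/

open Set

theorem sub_mul_pos_of_mem_Ioo_div {M W x : ℝ} (hW : 0 < W) (hx : x ∈ Ioo 0 (M / W)) :
    0 < M - W * x :=
  sub_pos.mpr ((lt_div_iff₀' hW).mp hx.2)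

theorem hasDerivAt_budget_objective (a b M W₁ W₂ : ℝ) {x : ℝ} (hx : x ≠ 0)
    (hu : M - W₂ * x ≠ 0) :
    HasDerivAt (fun x => a * W₁ / (M - W₂ * x) + b * W₁ / ((M - W₂ * x) * x ^ 2))
      ((a * W₂ * x ^ 3 - b * (2 * M - 3 * W₂ * x)) *
        (W₁ / ((M - W₂ * x) ^ 2 * x ^ 3))) x := by
  have hu' : HasDerivAt (fun x => M - W₂ * x) (-(W₂ * 1)) x :=
    ((hasDerivAt_id x).const_mul W₂).const_sub M
  have hv := hu'.mul (hasDerivAt_pow 2 x)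
  have h₁ := (hasDerivAt_const x (a * W₁)).div hu' hu
  have h₂ := (hasDerivAt_const x (b * W₁)).div hv (mul_ne_zero hu (pow_ne_zero 2 hx))
  refine (h₁.add h₂).congr_deriv ?_
  simp only [Pi.mul_apply]
  field_simp
  ring

theorem exists_budget_cubic_eq_zero {a b M W : ℝ} (ha : 0 < a) (hb : 0 < b) (hM : 0 < M)
    (hW : 0 < W) :
    ∃ x ∈ Ioo (0 : ℝ) (2 * M / (3 * W)), a * W * x ^ 3 - b * (2 * M - 3 * W * x) = 0 := by
  set c := 2 * M / (3 * W)
  have hc : 3 * W * c = 2 * M := mul_div_cancel₀ _ (by positivity)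
  have h₀ : a * W * 0 ^ 3 - b * (2 * M - 3 * W * 0) < 0 := by nlinarith
  have h_c : 0 < a * W * c ^ 3 - b * (2 * M - 3 * W * c) := by
    rw [hc, sub_self, mul_zero, sub_zero]
    positivity
  exact intermediate_value_Ioo (by positivity) (by fun_prop) ⟨h₀, h_c⟩

/-- Reduced exact objective on the budget curve:
`G(x₂) = aW₁/(M−W₂x₂) + bW₁/((M−W₂x₂)x₂²)` is differentiable on `(0, M/W₂)`,
its derivative has the same sign as `aW₂x₂³ − b(2M − 3W₂x₂)`, and `G` has at least one
critical point in `(0, 2M/(3W₂))`. -/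
theorem stmt_16 (a b M W₁ W₂ : ℝ)
    (ha : 0 < a) (hb : 0 < b) (hM : 0 < M) (hW₁ : 0 < W₁) (hW₂ : 0 < W₂)
    (G : ℝ → ℝ)
    (hG : ∀ x, G x = a * W₁ / (M - W₂ * x) + b * W₁ / ((M - W₂ * x) * x ^ 2)) :
    (∀ x ∈ Ioo (0 : ℝ) (M / W₂), DifferentiableAt ℝ G x) ∧
    (∀ x ∈ Ioo (0 : ℝ) (M / W₂),
      (0 < deriv G x ↔ 0 < a * W₂ * x ^ 3 - b * (2 * M - 3 * W₂ * x)) ∧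
      (deriv G x = 0 ↔ a * W₂ * x ^ 3 - b * (2 * M - 3 * W₂ * x) = 0) ∧
      (deriv G x < 0 ↔ a * W₂ * x ^ 3 - b * (2 * M - 3 * W₂ * x) < 0)) ∧
    (∃ x ∈ Ioo (0 : ℝ) (2 * M / (3 * W₂)), deriv G x = 0) := by
  obtain rfl := funext hG
  have hu : ∀ x ∈ Ioo (0 : ℝ) (M / W₂), 0 < M - W₂ * x := fun x hx ↦
    sub_mul_pos_of_mem_Ioo_div hW₂ hx
  have hG' : ∀ x ∈ Ioo (0 : ℝ) (M / W₂), HasDerivAt _ _ x := fun x hx ↦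
    hasDerivAt_budget_objective a b M W₁ W₂ hx.1.ne' (hu x hx).ne'
  refine ⟨fun x hx ↦ (hG' x hx).differentiableAt, fun x hx ↦ ?_, ?_⟩
  · have hfactor : 0 < W₁ / ((M - W₂ * x) ^ 2 * x ^ 3) := by
      have := hu x hx
      have := hx.1
      positivity
    rw [(hG' x hx).deriv]
    exact ⟨mul_pos_iff_of_pos_right hfactor, mul_eq_zero_iff_right hfactor.ne',
      ⟨fun h ↦ Right.neg_of_mul_neg_left h hfactor.le,
        fun h ↦ mul_neg_of_neg_of_pos h hfactor⟩⟩
  · obtain ⟨x, hx, hroot⟩ := exists_budget_cubic_eq_zero ha hb hM hW₂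
    have hxM : x ∈ Ioo (0 : ℝ) (M / W₂) :=
      ⟨hx.1, hx.2.trans (by rw [div_lt_div_iff₀ (by positivity) hW₂]; nlinarith)⟩
    exact ⟨x, hx, by rw [(hG' x hxM).deriv, hroot, zero_mul]⟩
end
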